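/- (Pre-treatment nullity of the aggregated staggered DiD parameter.) Suppose that for every g ∈ 𝒢, no anticipation holds throughout the pre-treatment period, E[Y(g+e, g) − Y(g+e, ∞) | G = g] = 0 for all event times e ≤ 0, and groupwise parallel trends holds, E[Y(g+e, ∞) − Y(g, ∞) | G = g] = E[Y(g+e, ∞) − Y(g, ∞) | G = ∞] for all e. Then β_g(e) = 0 for every g ∈ 𝒢 and every e ≤ 0 in the common observation window, and consequently the aggregated parameter β_A(e) = Σ_{g∈𝒢} w_g · β_g(e) equals 0 for all e ≤ 0, for any nonnegative weights w_g with Σ_{g∈𝒢} w_g = 1. -/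

import Mathlib

/-!
On the event `{G = g}` the observed outcome is the potential outcome `Y(·, g)`, and on `{G = ∞}`
it is `Y(·, ∞)`. For `e ≤ 0` the treated trend `Y(g+e, g) − Y(g, g)` splits pointwise as
`(Y(g+e, g) − Y(g+e, ∞)) + (Y(g+e, ∞) − Y(g, ∞)) − (Y(g, g) − Y(g, ∞))`; no anticipation at event
times `e` and `0` kills the outer terms in expectation, and parallel trends turns the middle term
into the never-treated trend, so `β_g(e) = 0`.
-/

open MeasureTheory ProbabilityTheory

theorem ProbabilityTheory.integral_cond_congr {Ω E : Type*} [MeasurableSpace Ω]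
    [NormedAddCommGroup E] [NormedSpace ℝ E] {μ : Measure Ω} {s : Set Ω} {f f' : Ω → E}
    (hs : MeasurableSet s) (h : ∀ ω ∈ s, f ω = f' ω) :
    ∫ ω, f ω ∂μ[|s] = ∫ ω, f' ω ∂μ[|s] :=
  integral_congr_ae ((ae_cond_mem hs).mono h)

theorem diff_in_diff_eq_zero {Ω : Type*} [MeasurableSpace Ω]
    {μ ν : Measure Ω} {y₁ x₁ y₀ x₀ : Ω → ℝ}
    (hy₁ : Integrable y₁ μ) (hx₁ : Integrable x₁ μ) (hy₀ : Integrable y₀ μ)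
    (hx₀ : Integrable x₀ μ)
    (hy : ∫ ω, (y₁ ω - y₀ ω) ∂μ = 0) (hx : ∫ ω, (x₁ ω - x₀ ω) ∂μ = 0)
    (htrend : ∫ ω, (y₀ ω - x₀ ω) ∂μ = ∫ ω, (y₀ ω - x₀ ω) ∂ν) :
    ∫ ω, (y₁ ω - x₁ ω) ∂μ - ∫ ω, (y₀ ω - x₀ ω) ∂ν = 0 := by
  have hy' : Integrable (fun ω => y₁ ω - y₀ ω) μ := hy₁.sub hy₀
  have hx' : Integrable (fun ω => x₁ ω - x₀ ω) μ := hx₁.sub hx₀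
  have h₀ : Integrable (fun ω => y₀ ω - x₀ ω) μ := hy₀.sub hx₀
  calc ∫ ω, (y₁ ω - x₁ ω) ∂μ - ∫ ω, (y₀ ω - x₀ ω) ∂ν
      = ∫ ω, ((y₁ ω - y₀ ω) - (x₁ ω - x₀ ω) + (y₀ ω - x₀ ω)) ∂μ
          - ∫ ω, (y₀ ω - x₀ ω) ∂μ := by
        rw [htrend]
        congr 2 with ω
        ring
    _ = 0 := by
        rw [integral_add _ h₀, integral_sub hy' hx', hy, hx]
        · ring
        · exact hy'.sub hx'

theorem staggered_did_pretreatment_nullity_general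
    {Ω γ : Type*} [MeasurableSpace Ω] [MeasurableSpace γ] [MeasurableSingletonClass γ]
    (P : Measure Ω)
    (G : Ω → γ) (hG : Measurable G)
    (Gs : Finset γ) (inf : γ)
    (period : γ → ℝ)
    (Ypot : ℝ → γ → Ω → ℝ)
    (hint : ∀ (s : ℝ) (k : γ), ∀ g ∈ Gs,
      Integrable (Ypot s k) (P[|{ω | G ω = g}])
        ∧ Integrable (Ypot s k) (P[|{ω | G ω = inf}]))
    (Yobs : ℝ → Ω → ℝ) (hYobs : ∀ s ω, Yobs s ω = Ypot s (G ω) ω)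
    -- group-specific DiD parameter
    (β : γ → ℝ → ℝ)
    (hβ : ∀ g e, β g e
      = (∫ ω, (Yobs (period g + e) ω - Yobs (period g) ω) ∂(P[|{ω | G ω = g}]))
        - ∫ ω, (Yobs (period g + e) ω - Yobs (period g) ω) ∂(P[|{ω | G ω = inf}]))
    -- groupwise no anticipation throughout the pre-treatment period
    (hNA : ∀ g ∈ Gs, ∀ e : ℝ, e ≤ 0 →
      (∫ ω, (Ypot (period g + e) g ω - Ypot (period g + e) inf ω)
        ∂(P[|{ω | G ω = g}])) = 0)
    -- groupwise parallel trends (for all event times)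
    (hPT : ∀ g ∈ Gs, ∀ e : ℝ,
      (∫ ω, (Ypot (period g + e) inf ω - Ypot (period g) inf ω) ∂(P[|{ω | G ω = g}]))
        = ∫ ω, (Ypot (period g + e) inf ω - Ypot (period g) inf ω)
            ∂(P[|{ω | G ω = inf}])) :
    (∀ g ∈ Gs, ∀ e : ℝ, e ≤ 0 → β g e = 0) ∧
      ∀ w : γ → ℝ, (∀ g ∈ Gs, 0 ≤ w g) → (∑ g ∈ Gs, w g) = 1 →
        ∀ e : ℝ, e ≤ 0 → (∑ g ∈ Gs, w g * β g e) = 0 := by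
  have hobs : ∀ k t s, ∫ ω, (Yobs t ω - Yobs s ω) ∂P[|{ω | G ω = k}]
      = ∫ ω, (Ypot t k ω - Ypot s k ω) ∂P[|{ω | G ω = k}] := fun k t s =>
    integral_cond_congr (hG (measurableSet_singleton k)) fun ω (hω : G ω = k) => by
      rw [hYobs, hYobs, hω]
  have hβ_zero : ∀ g ∈ Gs, ∀ e : ℝ, e ≤ 0 → β g e = 0 := by
    intro g hg e he
    rw [hβ, hobs, hobs]
    refine diff_in_diff_eq_zero (hint _ g g hg).1 (hint _ g g hg).1
      (hint _ inf g hg).1 (hint _ inf g hg).1 (hNA g hg e he) ?_ (hPT g hg e)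
    simpa using hNA g hg 0 le_rfl
  exact ⟨hβ_zero, fun w _ _ e he =>
    Finset.sum_eq_zero fun g hg => by rw [hβ_zero g hg e he, mul_zero]⟩

/-- Pre-treatment nullity of the aggregated staggered DiD parameter:
under groupwise no anticipation throughout the pre-treatment period and groupwise
parallel trends, `β_g(e) = 0` for every group `g` and every event time `e ≤ 0`, and
consequently any convex aggregation `β_A(e) = ∑_g w_g β_g(e)` vanishes for `e ≤ 0`. -/
theorem staggered_did_pretreatment_nullity
    {Ω γ : Type*} [MeasurableSpace Ω] [MeasurableSpace γ] [MeasurableSingletonClass γ]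
    (P : Measure Ω) [IsProbabilityMeasure P]
    (G : Ω → γ) (hG : Measurable G)
    (Gs : Finset γ) (inf : γ) (hinf : inf ∉ Gs)
    (hPg : ∀ g ∈ Gs, 0 < P {ω | G ω = g}) (hPinf : 0 < P {ω | G ω = inf})
    (period : γ → ℝ)
    (Ypot : ℝ → γ → Ω → ℝ)
    (hint : ∀ (s : ℝ) (k : γ), ∀ g ∈ Gs,
      Integrable (Ypot s k) (P[|{ω | G ω = g}])
        ∧ Integrable (Ypot s k) (P[|{ω | G ω = inf}]))
    (Yobs : ℝ → Ω → ℝ) (hYobs : ∀ s ω, Yobs s ω = Ypot s (G ω) ω)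
    -- group-specific DiD parameter
    (β : γ → ℝ → ℝ)
    (hβ : ∀ g e, β g e
      = (∫ ω, (Yobs (period g + e) ω - Yobs (period g) ω) ∂(P[|{ω | G ω = g}]))
        - ∫ ω, (Yobs (period g + e) ω - Yobs (period g) ω) ∂(P[|{ω | G ω = inf}]))
    -- groupwise no anticipation throughout the pre-treatment period
    (hNA : ∀ g ∈ Gs, ∀ e : ℝ, e ≤ 0 →
      (∫ ω, (Ypot (period g + e) g ω - Ypot (period g + e) inf ω)
        ∂(P[|{ω | G ω = g}])) = 0)
    -- groupwise parallel trends (for all event times)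
    (hPT : ∀ g ∈ Gs, ∀ e : ℝ,
      (∫ ω, (Ypot (period g + e) inf ω - Ypot (period g) inf ω) ∂(P[|{ω | G ω = g}]))
        = ∫ ω, (Ypot (period g + e) inf ω - Ypot (period g) inf ω)
            ∂(P[|{ω | G ω = inf}])) :
    (∀ g ∈ Gs, ∀ e : ℝ, e ≤ 0 → β g e = 0) ∧
      ∀ w : γ → ℝ, (∀ g ∈ Gs, 0 ≤ w g) → (∑ g ∈ Gs, w g) = 1 →
        ∀ e : ℝ, e ≤ 0 → (∑ g ∈ Gs, w g * β g e) = 0 :=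
  staggered_did_pretreatment_nullity_general P G hG Gs inf period Ypot hint Yobs hYobs β hβ hNA hPT
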